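/- Let q > 0, q ≠ 1, let n ∈ ℕ, let a be a nonzero complex number, and let x ∈ ℂ. Then, as the real parameters b, c and d tend jointly to +∞ (along the product filter), a^n p_n(x;a,b,c,d|q)/((ab;q)_n (ac;q)_n (ad;q)_n) converges to a^{−n} H_n(x;a^{−1}|q^{−1}), where H_n(x;a|q) denotes the continuous big q-Hermite polynomial. -/

import Mathlib

set_option autoImplicit false
set_option maxHeartbeats 1000000

open Finset Filter

/-- q-shifted factorial `(t;q)_n`. -/
noncomputable def qPoch (q t : ℂ) (n : ℕ) : ℂ := ∏ j ∈ Finset.range n, (1 - t * q ^ j)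

/-- For `x = cos θ`, a root `e^{iθ}` of `z² - 2xz + 1 = 0`. -/
noncomputable def awz (x : ℂ) : ℂ := x + (x ^ 2 - 1) ^ ((1 : ℂ) / 2)

/-- The Askey–Wilson polynomial `p_n(x;a,b,c,d|q)`. -/
noncomputable def askeyWilson (q a b c d : ℂ) (n : ℕ) (x : ℂ) : ℂ :=
  (a ^ n)⁻¹ * qPoch q (a * b) n * qPoch q (a * c) n * qPoch q (a * d) n *
    ∑ k ∈ Finset.range (n + 1),
      (qPoch q ((q ^ n)⁻¹) k * qPoch q (a * b * c * d * q ^ n * q⁻¹) k *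
          qPoch q (a * awz x) k * qPoch q (a * (awz x)⁻¹) k * q ^ k) /
        (qPoch q (a * b) k * qPoch q (a * c) k * qPoch q (a * d) k * qPoch q q k)

/-- The continuous big q-Hermite polynomial `H_n(x;a|q)`. -/
noncomputable def bigQHermite (q a : ℂ) (n : ℕ) (x : ℂ) : ℂ :=
  (a ^ n)⁻¹ *
    ∑ k ∈ Finset.range (n + 1),
      (qPoch q ((q ^ n)⁻¹) k * qPoch q (a * awz x) k * qPoch q (a * (awz x)⁻¹) k * q ^ k) /
        qPoch q q k

lemma awz_ne_zero (x : ℂ) : awz x ≠ 0 := by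
  unfold awz
  rcases eq_or_ne (x ^ 2 - 1) 0 with h | h
  · rw [h, Complex.zero_cpow (by norm_num)]
    intro hx
    simp only [add_zero] at hx
    rw [hx] at h; simp at h
  · intro hx
    have hs : ((x ^ 2 - 1) ^ ((1:ℂ)/2)) ^ 2 = x ^ 2 - 1 := by
      rw [sq, ← Complex.cpow_add _ _ h]
      norm_num
    have hx' : (x ^ 2 - 1) ^ ((1:ℂ)/2) = -x := by linear_combination hx
    rw [hx'] at hs
    simp at hs
    exact one_ne_zero (by linear_combination hs)

lemma qPoch_inv (q t : ℂ) (hq : q ≠ 0) (ht : t ≠ 0) (k : ℕ) :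
    qPoch q⁻¹ t k = (∏ j ∈ Finset.range k, (-(t * (q ^ j)⁻¹))) * qPoch q t⁻¹ k := by
  unfold qPoch
  rw [← Finset.prod_mul_distrib]
  refine Finset.prod_congr rfl fun j _ => ?_
  have hqj : q ^ j ≠ 0 := pow_ne_zero _ hq
  field_simp
  linear_combination (-t) * mul_inv_cancel₀ hqj

lemma qPochQQ_ne (q : ℝ) (hq0 : 0 < q) (hq1 : q ≠ 1) (k : ℕ) :
    qPoch (q : ℂ) (q : ℂ) k ≠ 0 := by
  unfold qPoch
  rw [Finset.prod_ne_zero_iff]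
  intro j _
  have hr : q ^ (j + 1) ≠ 1 := by
    rcases lt_or_gt_of_ne hq1 with h | h
    · exact ne_of_lt (pow_lt_one₀ hq0.le h (Nat.succ_ne_zero j))
    · exact ne_of_gt (one_lt_pow₀ h (Nat.succ_ne_zero j))
  intro hc
  apply hr
  have : ((q : ℂ)) ^ (j+1) = 1 := by
    rw [pow_succ]
    linear_combination -hc
  exact_mod_cast this

lemma rearr (n1 n2 n3 n4 e d1 d2 d3 d4 : ℂ) :
    (n1*n2*n3*n4*e)/(d1*d2*d3*d4) = (n1*n3*n4*e/d4) * (n2/(d1*d2*d3)) := by ring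

theorem stmt8 (q : ℝ) (hq0 : 0 < q) (hq1 : q ≠ 1) (n : ℕ)
    (a : ℂ) (ha : a ≠ 0) (x : ℂ) :
    Filter.Tendsto
      (fun p : ℝ × ℝ × ℝ => a ^ n * askeyWilson (q : ℂ) a (p.1 : ℂ) (p.2.1 : ℂ) (p.2.2 : ℂ) n x /
        (qPoch (q : ℂ) (a * (p.1 : ℂ)) n * qPoch (q : ℂ) (a * (p.2.1 : ℂ)) n *
          qPoch (q : ℂ) (a * (p.2.2 : ℂ)) n))
      (Filter.atTop ×ˢ (Filter.atTop ×ˢ Filter.atTop))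
      (nhds ((a ^ n)⁻¹ * bigQHermite ((q : ℂ))⁻¹ a⁻¹ n x)) := by
  have hz : awz x ≠ 0 := awz_ne_zero x
  set Q : ℂ := (q : ℂ) with hQdef
  have hQ0 : Q ≠ 0 := by
    rw [hQdef]; exact_mod_cast hq0.ne'
  have hQj : ∀ j : ℕ, Q ^ j ≠ 0 := fun j => pow_ne_zero _ hQ0
  have han : a ^ n ≠ 0 := pow_ne_zero n ha
  have hqQ : ∀ k : ℕ, qPoch Q Q k ≠ 0 := qPochQQ_ne q hq0 hq1
  set l : Filter (ℝ × ℝ × ℝ) := Filter.atTop ×ˢ (Filter.atTop ×ˢ Filter.atTop) with hldef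
  set L : ℕ → ℂ := fun j =>
    (0 - a * Q ^ n * Q⁻¹ * Q ^ j) / ((0 - a * Q ^ j) * (0 - a * Q ^ j) * (0 - a * Q ^ j))
    with hLdef
  set A : ℕ → ℂ := fun k =>
    qPoch Q ((Q ^ n)⁻¹) k * qPoch Q (a * awz x) k * qPoch Q (a * (awz x)⁻¹) k * Q ^ k /
      qPoch Q Q k with hAdef
  set F : ℕ → ℝ × ℝ × ℝ → ℂ := fun j p =>
    (((p.1 : ℂ) * (p.2.1 : ℂ) * (p.2.2 : ℂ))⁻¹ - a * Q ^ n * Q⁻¹ * Q ^ j) /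
      (((p.1 : ℂ)⁻¹ - a * Q ^ j) * ((p.2.1 : ℂ)⁻¹ - a * Q ^ j) * ((p.2.2 : ℂ)⁻¹ - a * Q ^ j))
    with hFdef
  -- coordinate tendsto facts
  have tb : Tendsto (fun p : ℝ × ℝ × ℝ => p.1) l atTop := tendsto_fst
  have tc : Tendsto (fun p : ℝ × ℝ × ℝ => p.2.1) l atTop := tendsto_fst.comp tendsto_snd
  have td : Tendsto (fun p : ℝ × ℝ × ℝ => p.2.2) l atTop := tendsto_snd.comp tendsto_snd
  have hbinv : Tendsto (fun p : ℝ × ℝ × ℝ => ((p.1 : ℂ))⁻¹) l (nhds 0) := by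
    have := (Complex.continuous_ofReal.tendsto 0).comp (tendsto_inv_atTop_zero.comp tb)
    simpa [Function.comp_def, Complex.ofReal_inv] using this
  have hcinv : Tendsto (fun p : ℝ × ℝ × ℝ => ((p.2.1 : ℂ))⁻¹) l (nhds 0) := by
    have := (Complex.continuous_ofReal.tendsto 0).comp (tendsto_inv_atTop_zero.comp tc)
    simpa [Function.comp_def, Complex.ofReal_inv] using this
  have hdinv : Tendsto (fun p : ℝ × ℝ × ℝ => ((p.2.2 : ℂ))⁻¹) l (nhds 0) := by
    have := (Complex.continuous_ofReal.tendsto 0).comp (tendsto_inv_atTop_zero.comp td)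
    simpa [Function.comp_def, Complex.ofReal_inv] using this
  have hbcd : Tendsto (fun p : ℝ × ℝ × ℝ => (((p.1 : ℂ) * (p.2.1 : ℂ) * (p.2.2 : ℂ)))⁻¹) l
      (nhds 0) := by
    have h := (hbinv.mul hcinv).mul hdinv
    simp only [mul_zero] at h
    refine h.congr fun p => ?_
    rw [mul_inv, mul_inv]
  -- Step A: the model function converges
  have hmodel : Tendsto
      (fun p : ℝ × ℝ × ℝ => ∑ k ∈ Finset.range (n + 1), A k * ∏ j ∈ Finset.range k, F j p) l
      (nhds (∑ k ∈ Finset.range (n + 1), A k * ∏ j ∈ Finset.range k, L j)) := by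
    apply tendsto_finset_sum
    intro k _
    apply Tendsto.const_mul
    apply tendsto_finset_prod
    intro j _
    refine Tendsto.div (hbcd.sub tendsto_const_nhds)
      (((hbinv.sub tendsto_const_nhds).mul (hcinv.sub tendsto_const_nhds)).mul
        (hdinv.sub tendsto_const_nhds)) ?_
    have : a * Q ^ j ≠ 0 := mul_ne_zero ha (hQj j)
    simp only [zero_sub, neg_ne_zero]
    exact mul_ne_zero (mul_ne_zero (neg_ne_zero.mpr this) (neg_ne_zero.mpr this))
      (neg_ne_zero.mpr this)
  -- Step B: eventual equality
  obtain ⟨B, hB1, hBt⟩ : ∃ B : ℝ, 1 ≤ B ∧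
      ∀ j < n, (‖a‖ * q ^ j)⁻¹ ≤ B - 1 := by
    refine ⟨1 + ∑ j ∈ Finset.range n, (‖a‖ * q ^ j)⁻¹, ?_, fun j hj => ?_⟩
    · have : 0 ≤ ∑ j ∈ Finset.range n, (‖a‖ * q ^ j)⁻¹ := by positivity
      linarith
    · have := Finset.single_le_sum
        (f := fun i => (‖a‖ * q ^ i)⁻¹)
        (fun i _ => by positivity) (Finset.mem_range.mpr hj)
      linarith
  have hkey : ∀ b : ℝ, B ≤ b → ((b : ℂ) ≠ 0 ∧ ∀ j < n, (1 : ℂ) - a * (b : ℂ) * Q ^ j ≠ 0) := by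
    intro b hBb
    have hb1 : (1 : ℝ) ≤ b := le_trans hB1 hBb
    refine ⟨Complex.ofReal_ne_zero.mpr (by linarith), fun j hj h => ?_⟩
    have h2 : a * (b : ℂ) * Q ^ j = 1 := by linear_combination -h
    have h3 : ‖a * (b : ℂ) * Q ^ j‖ = 1 := by rw [h2]; simp
    rw [norm_mul, norm_mul, norm_pow, Complex.norm_real, Real.norm_eq_abs, hQdef,
      Complex.norm_real, Real.norm_eq_abs,
      abs_of_pos (by linarith : (0:ℝ) < b), abs_of_pos hq0] at h3
    have hpos : 0 < ‖a‖ * q ^ j := by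
      have := norm_pos_iff.mpr ha
      positivity
    have hterm : (‖a‖ * q ^ j)⁻¹ ≤ B - 1 := hBt j hj
    have hinv : (‖a‖ * q ^ j)⁻¹ * (‖a‖ * q ^ j) = 1 :=
      inv_mul_cancel₀ hpos.ne'
    nlinarith [mul_le_mul_of_nonneg_right (show (‖a‖ * q ^ j)⁻¹ + 1 ≤ b by linarith)
      hpos.le]
  have hbB : ∀ᶠ p : ℝ × ℝ × ℝ in l, B ≤ p.1 := tb.eventually_ge_atTop B
  have hcB : ∀ᶠ p : ℝ × ℝ × ℝ in l, B ≤ p.2.1 := tc.eventually_ge_atTop B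
  have hdB : ∀ᶠ p : ℝ × ℝ × ℝ in l, B ≤ p.2.2 := td.eventually_ge_atTop B
  have heq : ∀ᶠ p : ℝ × ℝ × ℝ in l,
      (∑ k ∈ Finset.range (n + 1), A k * ∏ j ∈ Finset.range k, F j p) =
      a ^ n * askeyWilson Q a (p.1 : ℂ) (p.2.1 : ℂ) (p.2.2 : ℂ) n x /
        (qPoch Q (a * (p.1 : ℂ)) n * qPoch Q (a * (p.2.1 : ℂ)) n *
          qPoch Q (a * (p.2.2 : ℂ)) n) := by
    filter_upwards [hbB, hcB, hdB] with p hpb hpc hpd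
    obtain ⟨hb0, hbn⟩ := hkey p.1 hpb
    obtain ⟨hc0, hcn⟩ := hkey p.2.1 hpc
    obtain ⟨hd0, hdn⟩ := hkey p.2.2 hpd
    have hPb : qPoch Q (a * (p.1 : ℂ)) n ≠ 0 := by
      unfold qPoch; rw [Finset.prod_ne_zero_iff]
      intro j hj
      have := hbn j (Finset.mem_range.mp hj)
      intro hcon; apply this; linear_combination hcon
    have hPc : qPoch Q (a * (p.2.1 : ℂ)) n ≠ 0 := by
      unfold qPoch; rw [Finset.prod_ne_zero_iff]
      intro j hj
      have := hcn j (Finset.mem_range.mp hj)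
      intro hcon; apply this; linear_combination hcon
    have hPd : qPoch Q (a * (p.2.2 : ℂ)) n ≠ 0 := by
      unfold qPoch; rw [Finset.prod_ne_zero_iff]
      intro j hj
      have := hdn j (Finset.mem_range.mp hj)
      intro hcon; apply this; linear_combination hcon
    rw [askeyWilson]
    have hS : ∀ S : ℂ, a ^ n * ((a ^ n)⁻¹ * qPoch Q (a * (p.1 : ℂ)) n *
        qPoch Q (a * (p.2.1 : ℂ)) n * qPoch Q (a * (p.2.2 : ℂ)) n * S) /
        (qPoch Q (a * (p.1 : ℂ)) n * qPoch Q (a * (p.2.1 : ℂ)) n *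
          qPoch Q (a * (p.2.2 : ℂ)) n) = S := by
      intro S
      field_simp
    rw [hS]
    refine Finset.sum_congr rfl fun k hk => ?_
    have hkn : k ≤ n := Nat.lt_succ_iff.mp (Finset.mem_range.mp hk)
    rw [rearr]
    simp only [hAdef]
    congr 1
    have hmerge : qPoch Q (a * (p.1 : ℂ)) k * qPoch Q (a * (p.2.1 : ℂ)) k *
        qPoch Q (a * (p.2.2 : ℂ)) k =
        ∏ j ∈ Finset.range k, ((1 - a * (p.1 : ℂ) * Q ^ j) * (1 - a * (p.2.1 : ℂ) * Q ^ j) *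
          (1 - a * (p.2.2 : ℂ) * Q ^ j)) := by
      unfold qPoch
      rw [Finset.prod_mul_distrib, Finset.prod_mul_distrib]
    rw [hmerge]
    unfold qPoch
    rw [← Finset.prod_div_distrib]
    refine Finset.prod_congr rfl fun j hj => ?_
    have hjn : j < n := lt_of_lt_of_le (Finset.mem_range.mp hj) hkn
    simp only [hFdef]
    rw [div_eq_div_iff]
    · field_simp
    · have e1 : (p.1 : ℂ)⁻¹ - a * Q ^ j = (p.1 : ℂ)⁻¹ * (1 - a * (p.1 : ℂ) * Q ^ j) := by
        field_simp
      have e2 : (p.2.1 : ℂ)⁻¹ - a * Q ^ j = (p.2.1 : ℂ)⁻¹ * (1 - a * (p.2.1 : ℂ) * Q ^ j) := by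
        field_simp
      have e3 : (p.2.2 : ℂ)⁻¹ - a * Q ^ j = (p.2.2 : ℂ)⁻¹ * (1 - a * (p.2.2 : ℂ) * Q ^ j) := by
        field_simp
      rw [e1, e2, e3]
      exact mul_ne_zero (mul_ne_zero (mul_ne_zero (inv_ne_zero hb0) (hbn j hjn))
        (mul_ne_zero (inv_ne_zero hc0) (hcn j hjn)))
        (mul_ne_zero (inv_ne_zero hd0) (hdn j hjn))
    · exact mul_ne_zero (mul_ne_zero (hbn j hjn) (hcn j hjn)) (hdn j hjn)
  -- Step C: identify the limit
  have hlim : (∑ k ∈ Finset.range (n + 1), A k * ∏ j ∈ Finset.range k, L j) =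
      (a ^ n)⁻¹ * bigQHermite Q⁻¹ a⁻¹ n x := by
    rw [bigQHermite]
    simp only [inv_pow, inv_inv]
    rw [← mul_assoc, inv_mul_cancel₀ han, one_mul]
    refine Finset.sum_congr rfl fun k hk => ?_
    have h1 := qPoch_inv Q (Q ^ n) hQ0 (hQj n) k
    have h2 := qPoch_inv Q (a⁻¹ * awz x) hQ0 (mul_ne_zero (inv_ne_zero ha) hz) k
    have h3 := qPoch_inv Q (a⁻¹ * (awz x)⁻¹) hQ0
      (mul_ne_zero (inv_ne_zero ha) (inv_ne_zero hz)) k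
    have h4 := qPoch_inv Q Q⁻¹ hQ0 (inv_ne_zero hQ0) k
    rw [h1, h2, h3, h4]
    simp only [mul_inv, inv_inv]
    -- now express everything via products
    have key : ∏ j ∈ Finset.range k, (Q * L j) =
        ∏ j ∈ Finset.range k, ((-(Q ^ n * (Q ^ j)⁻¹)) * (-(a⁻¹ * awz x * (Q ^ j)⁻¹)) *
          (-(a⁻¹ * (awz x)⁻¹ * (Q ^ j)⁻¹)) * Q⁻¹ / (-(Q⁻¹ * (Q ^ j)⁻¹))) := by
      refine Finset.prod_congr rfl fun j _ => ?_
      simp only [hLdef]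
      have hQjj : Q ^ j ≠ 0 := hQj j
      field_simp
      ring
    have key2 : Q ^ k * ∏ j ∈ Finset.range k, L j =
        (∏ j ∈ Finset.range k, (-(Q ^ n * (Q ^ j)⁻¹))) *
        (∏ j ∈ Finset.range k, (-(a⁻¹ * awz x * (Q ^ j)⁻¹))) *
        (∏ j ∈ Finset.range k, (-(a⁻¹ * (awz x)⁻¹ * (Q ^ j)⁻¹))) * (Q⁻¹) ^ k /
        (∏ j ∈ Finset.range k, (-(Q⁻¹ * (Q ^ j)⁻¹))) := by
      have hh : Q ^ k * ∏ j ∈ Finset.range k, L j = ∏ j ∈ Finset.range k, (Q * L j) := by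
        rw [Finset.prod_mul_distrib, Finset.prod_const, Finset.card_range]
      rw [hh, key, Finset.prod_div_distrib, Finset.prod_mul_distrib, Finset.prod_mul_distrib,
        Finset.prod_mul_distrib, Finset.prod_const, Finset.card_range]
    simp only [hAdef]
    calc qPoch Q ((Q ^ n)⁻¹) k * qPoch Q (a * awz x) k * qPoch Q (a * (awz x)⁻¹) k * Q ^ k /
          qPoch Q Q k * ∏ j ∈ Finset.range k, L j
        = qPoch Q ((Q ^ n)⁻¹) k * qPoch Q (a * awz x) k * qPoch Q (a * (awz x)⁻¹) k /
          qPoch Q Q k * (Q ^ k * ∏ j ∈ Finset.range k, L j) := by ring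
      _ = qPoch Q ((Q ^ n)⁻¹) k * qPoch Q (a * awz x) k * qPoch Q (a * (awz x)⁻¹) k /
          qPoch Q Q k * ((∏ j ∈ Finset.range k, (-(Q ^ n * (Q ^ j)⁻¹))) *
          (∏ j ∈ Finset.range k, (-(a⁻¹ * awz x * (Q ^ j)⁻¹))) *
          (∏ j ∈ Finset.range k, (-(a⁻¹ * (awz x)⁻¹ * (Q ^ j)⁻¹))) * (Q⁻¹) ^ k /
          (∏ j ∈ Finset.range k, (-(Q⁻¹ * (Q ^ j)⁻¹)))) := by rw [key2]
      _ = (∏ j ∈ Finset.range k, (-(Q ^ n * (Q ^ j)⁻¹))) * qPoch Q ((Q ^ n)⁻¹) k *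
          ((∏ j ∈ Finset.range k, (-(a⁻¹ * awz x * (Q ^ j)⁻¹))) *
            qPoch Q (a * (awz x)⁻¹) k) *
          ((∏ j ∈ Finset.range k, (-(a⁻¹ * (awz x)⁻¹ * (Q ^ j)⁻¹))) *
            qPoch Q (a * awz x) k) * (Q ^ k)⁻¹ /
          ((∏ j ∈ Finset.range k, (-(Q⁻¹ * (Q ^ j)⁻¹))) * qPoch Q Q k) := by ring
  rw [← hlim]
  exact Tendsto.congr' heq hmodel
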